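/- Let (Ω, F, μ) be a probability space and let U, W, ε_M, ε_T, ε_Y be square-integrable real random variables, each with mean 0 and variance 1, with all pairwise covariances among {U, W, ε_M, ε_T, ε_Y} equal to 0. Let a, b, c, d, e, f be real numbers with b² + c² ≤ 1, a² + e² + 2abe ≤ 1, and d² + f² + 2cdf ≤ 1 (so that M, T, Y below each have variance 1). Define M := b·U + c·W + √(1−b²−c²)·ε_M, T := a·U + e·M + √(1−a²−e²−2abe)·ε_T, and Y := d·W + f·M + √(1−d²−f²−2cdf)·ε_Y. Then Cov(T, Y) = abf + cde + ef. -/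

import Mathlib

open MeasureTheory ProbabilityTheory

/-- Covariance of two real random variables: `Cov(X,Y) = E[XY] - E[X] E[Y]`. -/
noncomputable def covar {Ω : Type*} [MeasurableSpace Ω] (μ : Measure Ω) (X Y : Ω → ℝ) : ℝ :=
  (∫ ω, X ω * Y ω ∂μ) - (∫ ω, X ω ∂μ) * (∫ ω, Y ω ∂μ)

/-- The population OLS coefficient on `T` when regressing `Y` on `(T, M)`. -/
noncomputable def betaT {Ω : Type*} [MeasurableSpace Ω] (μ : Measure Ω) (Y T M : Ω → ℝ) : ℝ :=
  (covar μ Y T * variance M μ - covar μ Y M * covar μ M T) /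
    (variance T μ * variance M μ - (covar μ M T) ^ 2)

/-!
Both `T` and `Y` are linear combinations of the five pairwise uncorrelated variables
`U, W, εM, εT, εY`, so their covariance is the sum over these of the products of coefficients
times the variances. Substituting `M`, the coefficients of `T` are `(a + eb, ec, e√(1-b²-c²), ·, 0)`
and those of `Y` are `(fb, d + fc, f√(1-b²-c²), 0, ·)`; the resulting sum
`(a + eb) fb + ec (d + fc) + ef (1 - b² - c²)` collapses to `abf + cde + ef`.
-/

section Covariance

variable {Ω : Type*} [MeasurableSpace Ω] {μ : Measure Ω}

lemma covar_eq_covariance [IsProbabilityMeasure μ] {X Y : Ω → ℝ}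
    (hX : MemLp X 2 μ) (hY : MemLp Y 2 μ) : covar μ X Y = cov[X, Y; μ] := by
  rw [covariance_eq_sub hX hY]
  rfl

lemma covariance_sum_sum_of_pairwise_uncorrelated [IsFiniteMeasure μ] {ι : Type*} [Fintype ι]
    {X : ι → Ω → ℝ} (hX : ∀ i, MemLp (X i) 2 μ)
    (hcov : Pairwise fun i j ↦ cov[X i, X j; μ] = 0) (α β : ι → ℝ) :
    cov[fun ω ↦ ∑ i, α i * X i ω, fun ω ↦ ∑ i, β i * X i ω; μ]
      = ∑ i, α i * β i * Var[X i; μ] := by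
  rw [covariance_fun_sum_fun_sum (fun i ↦ (hX i).const_mul (α i))
    (fun i ↦ (hX i).const_mul (β i))]
  refine Finset.sum_congr rfl fun i _ ↦ ?_
  rw [Fintype.sum_eq_single i fun j hji ↦ by
      rw [covariance_const_mul_left, covariance_const_mul_right, hcov hji.symm, mul_zero,
        mul_zero],
    covariance_const_mul_left, covariance_const_mul_right,
    covariance_self (hX i).aestronglyMeasurable.aemeasurable]
  ring

end Covariance

theorem stmt7_general {Ω : Type*} [MeasurableSpace Ω] (μ : Measure Ω) [IsProbabilityMeasure μ]
    (U W εM εT εY : Ω → ℝ)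
    (hU2 : MemLp U 2 μ) (hW2 : MemLp W 2 μ) (hεM2 : MemLp εM 2 μ)
    (hεT2 : MemLp εT 2 μ) (hεY2 : MemLp εY 2 μ)
    (hUv : variance U μ = 1) (hWv : variance W μ = 1) (hεMv : variance εM μ = 1)
    (hUW : covar μ U W = 0)
    (hUεM : covar μ U εM = 0) (hUεT : covar μ U εT = 0) (hUεY : covar μ U εY = 0)
    (hWεM : covar μ W εM = 0) (hWεT : covar μ W εT = 0) (hWεY : covar μ W εY = 0)
    (hεMεT : covar μ εM εT = 0) (hεMεY : covar μ εM εY = 0) (hεTεY : covar μ εT εY = 0)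
    (a b c d e f : ℝ)
    (hbc : b ^ 2 + c ^ 2 ≤ 1)
    (M T Y : Ω → ℝ)
    (hM : M = fun ω => b * U ω + c * W ω + Real.sqrt (1 - b ^ 2 - c ^ 2) * εM ω)
    (hT : T = fun ω => a * U ω + e * M ω +
      Real.sqrt (1 - a ^ 2 - e ^ 2 - 2 * a * b * e) * εT ω)
    (hY : Y = fun ω => d * W ω + f * M ω +
      Real.sqrt (1 - d ^ 2 - f ^ 2 - 2 * c * d * f) * εY ω) :
    covar μ T Y = a * b * f + c * d * e + e * f := by
  set s := Real.sqrt (1 - b ^ 2 - c ^ 2)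
  set t := Real.sqrt (1 - a ^ 2 - e ^ 2 - 2 * a * b * e)
  set u := Real.sqrt (1 - d ^ 2 - f ^ 2 - 2 * c * d * f)
  have hs : s ^ 2 = 1 - b ^ 2 - c ^ 2 := Real.sq_sqrt (by linarith)
  let X : Fin 5 → Ω → ℝ := ![U, W, εM, εT, εY]
  have hX : ∀ i, MemLp (X i) 2 μ := by
    intro i; fin_cases i <;> assumption
  have hT' : T = fun ω ↦ ∑ i, ![a + e * b, e * c, e * s, t, 0] i * X i ω := by
    subst hM hT; funext ω; simp only [X, Fin.sum_univ_five, Matrix.cons_val]; ring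
  have hY' : Y = fun ω ↦ ∑ i, ![f * b, d + f * c, f * s, 0, u] i * X i ω := by
    subst hM hY; funext ω; simp only [X, Fin.sum_univ_five, Matrix.cons_val]; ring
  have hcov : Pairwise fun i j ↦ cov[X i, X j; μ] = 0 := by
    intro i j hij
    fin_cases i <;> fin_cases j <;> simp_all [X, covar_eq_covariance, covariance_comm]
  rw [hT', hY', covar_eq_covariance (memLp_finsetSum _ fun i _ ↦ (hX i).const_mul _)
    (memLp_finsetSum _ fun i _ ↦ (hX i).const_mul _),
    covariance_sum_sum_of_pairwise_uncorrelated hX hcov]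
  simp only [X, Fin.sum_univ_five, Matrix.cons_val, hUv, hWv, hεMv]
  linear_combination e * f * hs

/-- Bias of the unadjusted estimator in the Butterfly-structure:
`Cov(T, Y) = abf + cde + ef`. -/
theorem stmt7 {Ω : Type*} [MeasurableSpace Ω] (μ : Measure Ω) [IsProbabilityMeasure μ]
    (U W εM εT εY : Ω → ℝ)
    (hU2 : MemLp U 2 μ) (hW2 : MemLp W 2 μ) (hεM2 : MemLp εM 2 μ)
    (hεT2 : MemLp εT 2 μ) (hεY2 : MemLp εY 2 μ)
    (hUm : ∫ ω, U ω ∂μ = 0) (hWm : ∫ ω, W ω ∂μ = 0) (hεMm : ∫ ω, εM ω ∂μ = 0)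
    (hεTm : ∫ ω, εT ω ∂μ = 0) (hεYm : ∫ ω, εY ω ∂μ = 0)
    (hUv : variance U μ = 1) (hWv : variance W μ = 1) (hεMv : variance εM μ = 1)
    (hεTv : variance εT μ = 1) (hεYv : variance εY μ = 1)
    (hUW : covar μ U W = 0)
    (hUεM : covar μ U εM = 0) (hUεT : covar μ U εT = 0) (hUεY : covar μ U εY = 0)
    (hWεM : covar μ W εM = 0) (hWεT : covar μ W εT = 0) (hWεY : covar μ W εY = 0)
    (hεMεT : covar μ εM εT = 0) (hεMεY : covar μ εM εY = 0) (hεTεY : covar μ εT εY = 0)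
    (a b c d e f : ℝ)
    (hbc : b ^ 2 + c ^ 2 ≤ 1)
    (hae : a ^ 2 + e ^ 2 + 2 * a * b * e ≤ 1)
    (hdf : d ^ 2 + f ^ 2 + 2 * c * d * f ≤ 1)
    (M T Y : Ω → ℝ)
    (hM : M = fun ω => b * U ω + c * W ω + Real.sqrt (1 - b ^ 2 - c ^ 2) * εM ω)
    (hT : T = fun ω => a * U ω + e * M ω +
      Real.sqrt (1 - a ^ 2 - e ^ 2 - 2 * a * b * e) * εT ω)
    (hY : Y = fun ω => d * W ω + f * M ω +
      Real.sqrt (1 - d ^ 2 - f ^ 2 - 2 * c * d * f) * εY ω) :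
    covar μ T Y = a * b * f + c * d * e + e * f :=
  stmt7_general μ U W εM εT εY hU2 hW2 hεM2 hεT2 hεY2 hUv hWv hεMv hUW hUεM hUεT hUεY hWεM hWεT hWεY
    hεMεT hεMεY hεTεY a b c d e f hbc M T Y hM hT hY
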